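/- arXiv:2401.04833 — 2 statements merged into one kernel-verified Lean document; each statement's English description precedes it below -/
import Mathlib

section
/- Let (v,w) be a pair in a finite Weyl group with v ≤ w such that dim Ker(vw⁻¹ + 1) = l(w) − l(v), and let v ≤ v' ≤ w' ≤ w. Then dim Ker(v'(w')⁻¹ + 1) = l(w') − l(v'). -/
set_option linter.unusedSectionVars false

open scoped RealInnerProductSpace
open Module

variable {V : Type*} [NormedAddCommGroup V] [InnerProductSpace ℝ V] [FiniteDimensional ℝ V]

/-- The reflection in the hyperplane orthogonal to `γ` (the identity if `γ = 0`). -/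
noncomputable def srefl (γ : V) : V →ₗ[ℝ] V :=
  LinearMap.id - (LinearMap.toSpanSingleton ℝ V ((2 / ⟪γ, γ⟫) • γ)).comp (innerSL ℝ γ).toLinearMap

lemma srefl_apply (γ x : V) : srefl γ x = x - (2 * ⟪γ, x⟫ / ⟪γ, γ⟫) • γ := by
  simp [srefl, LinearMap.toSpanSingleton, smul_smul]
  ring_nf

lemma srefl_involutive (γ : V) : Function.Involutive (srefl γ) := by
  intro x
  rcases eq_or_ne γ 0 with h | h
  · simp [srefl_apply, h]
  · have hγ : ⟪γ, γ⟫ ≠ 0 := fun hc => h (inner_self_eq_zero.mp hc)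
    rw [srefl_apply, srefl_apply, inner_sub_right, real_inner_smul_right]
    field_simp
    ring_nf
    module

/-- The reflection in `γ` as a linear automorphism of `V`. -/
noncomputable def sref (γ : V) : V ≃ₗ[ℝ] V :=
  { srefl γ with
    invFun := srefl γ
    left_inv := srefl_involutive γ
    right_inv := srefl_involutive γ }

/-- A finite reduced crystallographic root system spanning `V`. -/
structure IsRootSystem (Δ : Set V) : Prop where
  finite : Δ.Finite
  nonzero : (0 : V) ∉ Δ
  span_top : Submodule.span ℝ Δ = ⊤
  refl_mem : ∀ γ ∈ Δ, ∀ β ∈ Δ, sref γ β ∈ Δ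
  crystallographic : ∀ γ ∈ Δ, ∀ β ∈ Δ, ∃ m : ℤ, 2 * ⟪β, γ⟫ / ⟪γ, γ⟫ = (m : ℝ)
  reduced : ∀ γ ∈ Δ, ∀ t : ℝ, t • γ ∈ Δ → t = 1 ∨ t = -1

/-- The Weyl group: the subgroup of `GL(V)` generated by the reflections in the roots. -/
def weylGroup (Δ : Set V) : Subgroup (V ≃ₗ[ℝ] V) :=
  Subgroup.closure {g | ∃ γ ∈ Δ, g = sref γ}

/-- The reflection length of `w`: the least number of reflections in roots whose
product is `w`. -/
noncomputable def reflLength (Δ : Set V) (w : V ≃ₗ[ℝ] V) : ℕ :=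
  sInf {r | ∃ γ : Fin r → V, (∀ i, γ i ∈ Δ) ∧ w = (List.ofFn fun i => sref (γ i)).prod}

/-- A base (system of simple roots `α` with positive roots `Pos`) for the root system `Δ`. -/
structure IsBase (Δ Pos : Set V) {n : ℕ} (α : Fin n → V) : Prop where
  pos_subset : Pos ⊆ Δ
  simple_mem : ∀ i, α i ∈ Pos
  mem_or_neg : ∀ γ ∈ Δ, γ ∈ Pos ∨ -γ ∈ Pos
  not_neg : ∀ γ ∈ Pos, -γ ∉ Pos
  pos_combo : ∀ γ ∈ Pos, ∃ c : Fin n → ℕ, γ = ∑ j, (c j : ℝ) • α j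

/-- `l` is a word (in the simple reflections) for `w`. -/
def IsWord {n : ℕ} (α : Fin n → V) (l : List (Fin n)) (w : V ≃ₗ[ℝ] V) : Prop :=
  (l.map fun j => sref (α j)).prod = w

/-- The Coxeter length of `w` with respect to the simple system `α`. -/
noncomputable def len {n : ℕ} (α : Fin n → V) (w : V ≃ₗ[ℝ] V) : ℕ :=
  sInf {r | ∃ l : List (Fin n), IsWord α l w ∧ l.length = r}

/-- Bruhat order: `v ≤ w` iff some reduced word for `w` has a subword with value `v`. -/
def bruhatLE {n : ℕ} (α : Fin n → V) (v w : V ≃ₗ[ℝ] V) : Prop :=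
  ∃ l : List (Fin n), IsWord α l w ∧ l.length = len α w ∧
    ∃ l' : List (Fin n), l'.Sublist l ∧ IsWord α l' v

/-- The product of the simple reflections indexed by a word given as a function
`i : Fin m → Fin n`, along a list of positions. -/
noncomputable def fwordProd {n m : ℕ} (α : Fin n → V) (i : Fin m → Fin n)
    (l : List (Fin m)) : V ≃ₗ[ℝ] V :=
  (l.map fun j => sref (α (i j))).prod

/-- The full product `s_{i₁} ⋯ s_{i_m}`. -/
noncomputable def fullProd {n m : ℕ} (α : Fin n → V) (i : Fin m → Fin n) : V ≃ₗ[ℝ] V :=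
  fwordProd α i (List.finRange m)

/-- The root `β_k = s_{i₁} ⋯ s_{i_{k-1}} (α_{i_k})` associated to the `k`-th position
of the word `i` (positions indexed from `0`). -/
noncomputable def betaRoot {n m : ℕ} (α : Fin n → V) (i : Fin m → Fin n) (k : Fin m) : V :=
  fwordProd α i ((List.finRange m).take k) (α (i k))

/-- The value of the subword of `i` obtained by deleting the positions `p t`. -/
noncomputable def complProd {n m d : ℕ} (α : Fin n → V) (i : Fin m → Fin n)
    (p : Fin d → Fin m) : V ≃ₗ[ℝ] V :=
  fwordProd α i ((List.finRange m).filter fun j => ∀ t, p t ≠ j)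

/-!
For invertible `u` the `-1`-eigenspace meets the fixed space trivially, so
`dim Ker(u + 1) ≤ codim Fix(u)`; moreover `codim Fix` is subadditive, invariant under
conjugation, and at most `1` on a reflection. If `v` is the value of a subword of a reduced
word for `w`, then `v w⁻¹` is a product of conjugates of the reflections in the deleted
letters, so `codim Fix(v w⁻¹) ≤ l(w) - l(v)`. For `v w⁻¹ = (v v'⁻¹)(v' w'⁻¹)(w' w⁻¹)` the
hypothesis forces equality throughout
`dim Ker(v w⁻¹ + 1) ≤ codim Fix(v w⁻¹) ≤ Σ codim Fix(factor) ≤ l(w) - l(v)`,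
and equality in the first inequality passes to each factor of a product whose fixed-space
codimensions add up.
-/

open LinearMap Submodule

section FixedSpaces

variable {K W : Type*} [Field K] [AddCommGroup W] [Module K W] [FiniteDimensional K W]

noncomputable def finrankFix (u : W ≃ₗ[K] W) : ℕ :=
  finrank K (ker ((u : W →ₗ[K] W) - 1))

noncomputable def finrankNegOne (u : W ≃ₗ[K] W) : ℕ :=
  finrank K (ker ((u : W →ₗ[K] W) + 1))

lemma mem_ker_sub_one {u : W ≃ₗ[K] W} {x : W} : x ∈ ker ((u : W →ₗ[K] W) - 1) ↔ u x = x := by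
  simp [sub_eq_zero]

lemma mem_ker_add_one {u : W ≃ₗ[K] W} {x : W} : x ∈ ker ((u : W →ₗ[K] W) + 1) ↔ u x = -x := by
  simp [add_eq_zero_iff_eq_neg]

lemma finrank_add_finrank_le_finrank_add_finrank_inf (A B : Submodule K W) :
    finrank K A + finrank K B ≤ finrank K W + finrank K ↥(A ⊓ B) := by
  rw [← finrank_sup_add_finrank_inf_eq]
  exact Nat.add_le_add_right (finrank_le _) _

lemma finrankFix_one : finrankFix (1 : W ≃ₗ[K] W) = finrank K W := by
  have : ker (((1 : W ≃ₗ[K] W) : W →ₗ[K] W) - 1) = ⊤ := by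
    ext x
    simp
  rw [finrankFix, this, finrank_top]

lemma finrankNegOne_add_finrankFix_le [NeZero (2 : K)] (u : W ≃ₗ[K] W) :
    finrankNegOne u + finrankFix u ≤ finrank K W := by
  refine finrank_add_finrank_le_of_disjoint (disjoint_def.mpr fun x hneg hfix => ?_)
  rw [mem_ker_add_one] at hneg
  rw [mem_ker_sub_one, hneg, neg_eq_iff_add_eq_zero, ← two_smul K x] at hfix
  exact (smul_eq_zero.mp hfix).resolve_left two_ne_zero

lemma finrankFix_add_finrankFix_le (a b : W ≃ₗ[K] W) :
    finrankFix a + finrankFix b ≤ finrank K W + finrankFix (a * b) := by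
  refine (finrank_add_finrank_le_finrank_add_finrank_inf _ _).trans
    (Nat.add_le_add_left (finrank_mono fun x hx => ?_) _)
  obtain ⟨ha, hb⟩ := mem_inf.mp hx
  rw [mem_ker_sub_one] at ha hb ⊢
  rw [LinearEquiv.mul_apply, hb, ha]

lemma finrankFix_conj (g u : W ≃ₗ[K] W) : finrankFix (g * u * g⁻¹) = finrankFix u := by
  have : ker (((g * u * g⁻¹ : W ≃ₗ[K] W)) - 1 : W →ₗ[K] W) =
      (ker ((u : W →ₗ[K] W) - 1)).map (g : W →ₗ[K] W) := by
    ext y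
    rw [mem_map_equiv, mem_ker_sub_one, mem_ker_sub_one]
    exact (LinearEquiv.eq_symm_apply g).symm
  rw [finrankFix, finrankFix, this, LinearEquiv.finrank_map_eq]

/-- A `-1`-eigenvector of `g h` fixed by one factor is a `-1`-eigenvector of the other. -/
lemma finrankNegOne_add_finrankFix_eq_of_mul [NeZero (2 : K)] {g h : W ≃ₗ[K] W}
    (hgh : finrankNegOne (g * h) + finrankFix (g * h) = finrank K W)
    (hfix : finrankFix g + finrankFix h = finrank K W + finrankFix (g * h)) :
    finrankNegOne g + finrankFix g = finrank K W ∧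
      finrankNegOne h + finrankFix h = finrank K W := by
  have hleft : ker (((g * h : W ≃ₗ[K] W) : W →ₗ[K] W) + 1) ⊓ ker ((h : W →ₗ[K] W) - 1) ≤
      ker ((g : W →ₗ[K] W) + 1) := fun x hx => by
    obtain ⟨hneg, hfx⟩ := mem_inf.mp hx
    rw [mem_ker_add_one, LinearEquiv.mul_apply] at hneg
    rw [mem_ker_sub_one] at hfx
    rw [mem_ker_add_one, ← hneg, hfx]
  have hright : ker (((g * h : W ≃ₗ[K] W) : W →ₗ[K] W) + 1) ⊓ ker ((g : W →ₗ[K] W) - 1) ≤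
      ker ((h : W →ₗ[K] W) + 1) := fun x hx => by
    obtain ⟨hneg, hfx⟩ := mem_inf.mp hx
    rw [mem_ker_add_one, LinearEquiv.mul_apply] at hneg
    rw [mem_ker_sub_one] at hfx
    rw [mem_ker_add_one]
    exact g.injective (by rw [hneg, map_neg, hfx])
  have := finrank_add_finrank_le_finrank_add_finrank_inf
    (ker (((g * h : W ≃ₗ[K] W) : W →ₗ[K] W) + 1)) (ker ((h : W →ₗ[K] W) - 1))
  have := finrank_add_finrank_le_finrank_add_finrank_inf
    (ker (((g * h : W ≃ₗ[K] W) : W →ₗ[K] W) + 1)) (ker ((g : W →ₗ[K] W) - 1))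
  have := finrank_mono hleft
  have := finrank_mono hright
  have := finrankNegOne_add_finrankFix_le g
  have := finrankNegOne_add_finrankFix_le h
  unfold finrankNegOne finrankFix at *
  omega

end FixedSpaces

lemma sref_mul_self (γ : V) : sref γ * sref γ = 1 := by
  ext x
  exact srefl_involutive γ x

lemma sref_inv (γ : V) : (sref γ)⁻¹ = sref γ :=
  inv_eq_of_mul_eq_one_right (sref_mul_self γ)

lemma finrank_le_finrankFix_sref_add_one (γ : V) : finrank ℝ V ≤ finrankFix (sref γ) + 1 := by
  have hle : (ℝ ∙ γ)ᗮ ≤ ker (((sref γ : V ≃ₗ[ℝ] V) : V →ₗ[ℝ] V) - 1) := fun x hx => by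
    rw [mem_orthogonal_singleton_iff_inner_right] at hx
    rw [mem_ker_sub_one]
    change srefl γ x = x
    simp [srefl_apply, hx]
  have := finrank_mono hle
  have := (ℝ ∙ γ).finrank_add_finrank_orthogonal
  have : finrank ℝ (ℝ ∙ γ) ≤ 1 := by simpa using finrank_span_le_card ({γ} : Set V)
  unfold finrankFix
  omega

lemma finrank_add_length_le_of_sublist {l' l : List V} (h : l'.Sublist l) :
    finrank ℝ V + l'.length ≤ finrankFix ((l'.map sref).prod * (l.map sref).prod⁻¹) + l.length := by
  induction h with
  | slnil => simp [finrankFix_one]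
  | @cons l' l γ _ ih =>
    have hprod : (l'.map sref).prod * ((γ :: l).map sref).prod⁻¹ =
        (l'.map sref).prod * (l.map sref).prod⁻¹ * sref γ := by
      rw [List.map_cons, List.prod_cons, mul_inv_rev, sref_inv, mul_assoc]
    have := finrankFix_add_finrankFix_le ((l'.map sref).prod * (l.map sref).prod⁻¹) (sref γ)
    have := finrank_le_finrankFix_sref_add_one γ
    rw [hprod, List.length_cons]
    omega
  | @cons_cons l' l γ _ ih =>
    have hprod : ((γ :: l').map sref).prod * ((γ :: l).map sref).prod⁻¹ =
        sref γ * ((l'.map sref).prod * (l.map sref).prod⁻¹) * (sref γ)⁻¹ := by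
      simp only [List.map_cons, List.prod_cons, mul_inv_rev]
      group
    rw [hprod, finrankFix_conj, List.length_cons, List.length_cons]
    omega

lemma finrank_add_len_le_of_bruhatLE {n : ℕ} {α : Fin n → V} {v w : V ≃ₗ[ℝ] V}
    (h : bruhatLE α v w) : finrank ℝ V + len α v ≤ finrankFix (v * w⁻¹) + len α w := by
  obtain ⟨l, hw, hlen, l', hsub, hv⟩ := h
  have hlen' : len α v ≤ l'.length := Nat.sInf_le ⟨l', hv, rfl⟩
  have key := finrank_add_length_le_of_sublist (hsub.map α)
  simp only [List.map_map, List.length_map] at key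
  unfold IsWord at hv hw
  subst hv hw
  rw [← hlen]
  exact le_trans (by omega) key

theorem statement11_general {n : ℕ} {α : Fin n → V}
    (v v' w' w : V ≃ₗ[ℝ] V)
    (h1 : bruhatLE α v v') (h2 : bruhatLE α v' w') (h3 : bruhatLE α w' w)
    (hker : finrank ℝ (LinearMap.ker ((↑(v * w⁻¹) : V →ₗ[ℝ] V) + 1)) =
      len α w - len α v) :
    finrank ℝ (LinearMap.ker ((↑(v' * w'⁻¹) : V →ₗ[ℝ] V) + 1)) =
      len α w' - len α v' := by
  have b1 := finrank_add_len_le_of_bruhatLE h1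
  have b2 := finrank_add_len_le_of_bruhatLE h2
  have b3 := finrank_add_len_le_of_bruhatLE h3
  have hvw : v * v'⁻¹ * (v' * w'⁻¹ * (w' * w⁻¹)) = v * w⁻¹ := by group
  have s1 := finrankFix_add_finrankFix_le (v * v'⁻¹) (v' * w'⁻¹ * (w' * w⁻¹))
  have s2 := finrankFix_add_finrankFix_le (v' * w'⁻¹) (w' * w⁻¹)
  rw [hvw] at s1
  have hneg := finrankNegOne_add_finrankFix_le (v * w⁻¹)
  change finrankNegOne (v * w⁻¹) = len α w - len α v at hker
  obtain ⟨-, htail⟩ := finrankNegOne_add_finrankFix_eq_of_mul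
    (g := v * v'⁻¹) (h := v' * w'⁻¹ * (w' * w⁻¹)) (by rw [hvw]; omega) (by rw [hvw]; omega)
  obtain ⟨hmid, -⟩ := finrankNegOne_add_finrankFix_eq_of_mul
    (g := v' * w'⁻¹) (h := w' * w⁻¹) htail (by omega)
  change finrankNegOne (v' * w'⁻¹) = len α w' - len α v'
  omega

theorem statement11 {Δ Pos : Set V} {n : ℕ} {α : Fin n → V}
    (hΔ : IsRootSystem Δ) (hb : IsBase Δ Pos α)
    (v v' w' w : V ≃ₗ[ℝ] V)
    (h1 : bruhatLE α v v') (h2 : bruhatLE α v' w') (h3 : bruhatLE α w' w)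
    (hker : finrank ℝ (LinearMap.ker ((↑(v * w⁻¹) : V →ₗ[ℝ] V) + 1)) =
      len α w - len α v) :
    finrank ℝ (LinearMap.ker ((↑(v' * w'⁻¹) : V →ₗ[ℝ] V) + 1)) =
      len α w' - len α v' :=
  statement11_general v v' w' w h1 h2 h3 hker
end

section
/- Let (v,w) be a pair in a finite Weyl group with v = s_{β_{p₁}}⋯s_{β_{p_d}} w as in the GCR setup (pairwise orthogonal roots β_{p₁},…,β_{p_d} from a reduced word of w, d = l(w) − l(v)). For a subset K ⊆ {1,…,d}, let w_K = (∏_{j∈K} s_{β_{p_j}}) w. Then for distinct subsets J ≠ K of {1,…,d}, the elements w_J and w_K are distinct. -/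
/-!
A product of reflections in pairwise orthogonal nonzero vectors `β_j`, `j ∈ K`, negates `β_j`
for `j ∈ K` and fixes it for `j ∉ K`, so it determines `K`. Cancelling `w` on the right,
`w_J = w_K` forces the two reflection products, hence `J` and `K`, to agree.
-/

set_option linter.unusedSectionVars false

open scoped RealInnerProductSpace
open Module

variable {V : Type*} [NormedAddCommGroup V] [InnerProductSpace ℝ V] [FiniteDimensional ℝ V]

/-- The element `w_K = (∏_{j ∈ K} s_{β_{p_j}}) w` (product in increasing order of `K`). -/
noncomputable def wKelt {n m d : ℕ} (α : Fin n → V) (i : Fin m → Fin n)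
    (p : Fin d → Fin m) (K : Finset (Fin d)) : V ≃ₗ[ℝ] V :=
  ((K.sort (· ≤ ·)).map fun j => sref (betaRoot α i (p j))).prod * fullProd α i

lemma sref_apply (γ x : V) : sref γ x = x - (2 * ⟪γ, x⟫ / ⟪γ, γ⟫) • γ :=
  srefl_apply γ x

lemma sref_apply_of_inner_eq_zero {γ x : V} (h : ⟪γ, x⟫ = 0) : sref γ x = x := by
  simp [sref_apply, h]

lemma sref_apply_self {γ : V} (hγ : γ ≠ 0) : sref γ γ = -γ := by
  rw [sref_apply, mul_div_assoc, div_self (inner_self_ne_zero.mpr hγ), mul_one, two_smul]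
  abel

section Orthogonal

variable {ι : Type*} {β : ι → V}

lemma prod_sref_apply_of_pairwise_orthogonal [DecidableEq ι]
    (horth : Pairwise fun j k => ⟪β j, β k⟫ = 0) (hβ : ∀ j, β j ≠ 0)
    {l : List ι} (hl : l.Nodup) (j : ι) :
    (l.map fun t => sref (β t)).prod (β j) = if j ∈ l then -β j else β j := by
  induction l with
  | nil => simp
  | cons a l ih =>
    obtain ⟨hal, hl⟩ := List.nodup_cons.mp hl
    rw [List.map_cons, List.prod_cons, LinearEquiv.mul_apply, ih hl]
    by_cases haj : a = j
    · subst haj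
      simp [hal, sref_apply_self (hβ a)]
    · have hfix := sref_apply_of_inner_eq_zero (horth haj)
      by_cases hjl : j ∈ l
      · simp [hjl, hfix]
      · simp [hjl, Ne.symm haj, hfix]

variable [LinearOrder ι]

lemma prod_sort_sref_injective (horth : Pairwise fun j k => ⟪β j, β k⟫ = 0)
    (hβ : ∀ j, β j ≠ 0) :
    Function.Injective fun K : Finset ι => ((K.sort (· ≤ ·)).map fun t => sref (β t)).prod := by
  have hact (K : Finset ι) (j : ι) :
      ((K.sort (· ≤ ·)).map fun t => sref (β t)).prod (β j) = if j ∈ K then -β j else β j := by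
    simpa using prod_sref_apply_of_pairwise_orthogonal horth hβ (K.sort_nodup (· ≤ ·)) j
  intro J K hJK
  ext j
  have hj := congrArg (fun g : V ≃ₗ[ℝ] V => g (β j)) hJK
  simp only [hact] at hj
  have hneg : -β j ≠ β j := fun h => hβ j <| by
    rwa [neg_eq_iff_add_eq_zero, ← two_smul ℝ, smul_eq_zero, or_iff_right two_ne_zero] at h
  split_ifs at hj with hJ hK hK
  · exact iff_of_true hJ hK
  · exact absurd hj hneg
  · exact absurd hj.symm hneg
  · exact iff_of_false hJ hK

end Orthogonal

lemma betaRoot_ne_zero {n m : ℕ} {α : Fin n → V} (hα : ∀ j, α j ≠ 0) (i : Fin m → Fin n)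
    (k : Fin m) : betaRoot α i k ≠ 0 :=
  (LinearEquiv.map_ne_zero_iff _).mpr (hα (i k))

theorem statement12_general {Δ Pos : Set V} {n : ℕ} {α : Fin n → V}
    (hΔ : IsRootSystem Δ) (hb : IsBase Δ Pos α)
    {m d : ℕ} (i : Fin m → Fin n)
    (p : Fin d → Fin m)
    (horth : ∀ j k : Fin d, j ≠ k → ⟪betaRoot α i (p j), betaRoot α i (p k)⟫ = 0) :
    ∀ J K : Finset (Fin d), J ≠ K → wKelt α i p J ≠ wKelt α i p K := by
  have hα (j : Fin n) : α j ≠ 0 := fun h =>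
    hΔ.nonzero (h ▸ hb.pos_subset (hb.simple_mem j))
  intro J K hJK hw
  exact hJK <| prod_sort_sref_injective (β := fun j => betaRoot α i (p j)) horth
    (fun j => betaRoot_ne_zero hα i (p j)) (mul_right_cancel hw)

theorem statement12 {Δ Pos : Set V} {n : ℕ} {α : Fin n → V}
    (hΔ : IsRootSystem Δ) (hb : IsBase Δ Pos α)
    {m d : ℕ} (i : Fin m → Fin n) (hred : len α (fullProd α i) = m)
    (p : Fin d → Fin m) (hp : StrictMono p)
    (hsub : len α (complProd α i p) = m - d)
    (horth : ∀ j k : Fin d, j ≠ k → ⟪betaRoot α i (p j), betaRoot α i (p k)⟫ = 0) :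
    ∀ J K : Finset (Fin d), J ≠ K → wKelt α i p J ≠ wKelt α i p K :=
  statement12_general hΔ hb i p horth
end
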